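/- arXiv:2101.09770 — 3 statements merged into one kernel-verified Lean document; each statement's English description precedes it below -/
import Mathlib

section
/- Let G be a finite group and f, g : G → ℂ. For k ≥ 1, define ⟨f,g⟩_k = Σ_{s ∈ G^k, t ∈ G} Σ_x f_s(x) · conj(g_s(xt)), where for s = (s₁,…,s_k), f_s(x) = Π_{ε ∈ {0,1}^k} C^{ε₁+⋯+ε_k} f(x s₁^{ε₁}⋯s_k^{ε_k}) and C denotes complex conjugation. Then ⟨f,g⟩_k is a nonnegative real number. -/
open Finset
open scoped Pointwise

variable {G : Type*} [Group G] [Fintype G] [DecidableEq G]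

/-- The ordered product `s₁^{ε₁} ⋯ s_k^{ε_k}`. -/
def epsProd {G : Type*} [Group G] {k : ℕ} (s : Fin k → G) (ε : Fin k → Bool) : G :=
  (List.ofFn fun i => if ε i then s i else 1).prod

/-- The non-normalized Gowers `U^k`-norm of (the indicator function of) `A`:
`‖A‖_{U^k} = ∑_{x₀,x₁,…,x_k ∈ G} ∏_{ε ∈ {0,1}^k} 1_A(x₀ x₁^{ε₁}⋯x_k^{ε_k})`. -/
def gowers {G : Type*} [Group G] [Fintype G] [DecidableEq G] (k : ℕ) (A : Finset G) : ℕ :=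
  ∑ x₀ : G, ∑ x : Fin k → G, ∏ ε : Fin k → Bool, (if x₀ * epsProd x ε ∈ A then 1 else 0)

/-- The fiber set `A_s = {x : x s₁^{ε₁}⋯s_k^{ε_k} ∈ A for all ε ∈ {0,1}^k}`. -/
def subFiber {G : Type*} [Group G] [Fintype G] [DecidableEq G] {k : ℕ} (A : Finset G)
    (s : Fin k → G) : Finset G :=
  Finset.univ.filter fun x => ∀ ε : Fin k → Bool, x * epsProd s ε ∈ A

/-- `f_s(x) = ∏_{ε ∈ {0,1}^k} C^{ε₁+⋯+ε_k} f(x s₁^{ε₁}⋯s_k^{ε_k})`, where `C` is complex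
conjugation. -/
noncomputable def twist {G : Type*} [Group G] (f : G → ℂ) {k : ℕ} (s : Fin k → G) (x : G) : ℂ :=
  ∏ ε : Fin k → Bool,
    if (Finset.univ.filter fun i => ε i = true).card % 2 = 0 then f (x * epsProd s ε)
    else (starRingEnd ℂ) (f (x * epsProd s ε))

/-- `⟨f,g⟩_k = ∑_{s ∈ G^k, t ∈ G} ∑_x f_s(x) · conj(g_s(xt))`. -/
noncomputable def scalarK {G : Type*} [Group G] [Fintype G] (k : ℕ) (f g : G → ℂ) : ℂ :=
  ∑ s : Fin k → G, ∑ t : G, ∑ x : G, twist f s x * (starRingEnd ℂ) (twist g s (x * t))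

/-!
Splitting off the first coordinate of `s`, one has `f_{(a,s)}(x) = f_s(x) · conj f_s(x a)`. After
summing out `t`, the quantity becomes `∑_s ∑_a c_{f_s}(a) · conj c_{g_s}(a)` with the autocorrelation
`c_F(a) = ∑_x F(x) conj F(x a)`, and the substitution `y = w x`, `u = x a` turns
`∑_a c_F(a) conj c_H(a)` into `∑_w |∑_u conj F(u) H(w u)|² ≥ 0`.
-/

open ComplexConjugate

lemma epsProd_cons {G : Type*} [Group G] {k : ℕ} (a : G) (s : Fin k → G) (b : Bool)
    (ε : Fin k → Bool) :
    epsProd (Fin.cons a s) (Fin.cons b ε) = (if b then a else 1) * epsProd s ε := by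
  simp [epsProd, List.ofFn_succ]

lemma card_filter_cons {k : ℕ} (b : Bool) (ε : Fin k → Bool) :
    #{i | (Fin.cons b ε : Fin (k + 1) → Bool) i = true} =
      (if b then 1 else 0) + #{i | ε i = true} := by
  rw [Fin.card_filter_univ_succ']
  simp

lemma ite_mod_two_succ {R : Type*} [InvolutiveStar R] (m : ℕ) (z : R) :
    (if (1 + m) % 2 = 0 then z else star z) = star (if m % 2 = 0 then z else star z) := by
  rcases Nat.mod_two_eq_zero_or_one m with h | h <;>
    simp [h, add_comm 1, Nat.succ_mod_two_eq_zero_iff]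

lemma twist_cons {G : Type*} [Group G] (f : G → ℂ) {k : ℕ} (a : G) (s : Fin k → G) (x : G) :
    twist f (Fin.cons a s) x = twist f s x * conj (twist f s (x * a)) := by
  rw [twist, ← (Fin.consEquiv fun _ => Bool).prod_comp, Fintype.prod_prod_type, Fintype.prod_bool,
    twist, twist, map_prod, mul_comm]
  congr 1 <;> refine Finset.prod_congr rfl fun ε _ => ?_
  · rw [show (Fin.consEquiv fun _ => Bool) (false, ε) = Fin.cons false ε from rfl, card_filter_cons,
      epsProd_cons]
    simp
  · rw [show (Fin.consEquiv fun _ => Bool) (true, ε) = Fin.cons true ε from rfl, card_filter_cons,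
      epsProd_cons, if_pos rfl, if_pos rfl, ← mul_assoc]
    exact ite_mod_two_succ _ _

section Correlation

variable {R : Type*} [CommSemiring R] [StarRing R] {G : Type*} [Group G] [Fintype G]

lemma sum_sum_mul_conj_mul_right (A B : G → R) :
    ∑ t, ∑ x, A x * conj (B (x * t)) = (∑ x, A x) * conj (∑ y, B y) := by
  rw [sum_comm, sum_mul]
  refine sum_congr rfl fun x _ => ?_
  rw [← mul_sum, map_sum]
  exact congrArg _ (Equiv.sum_comp (Equiv.mulLeft x) fun y => conj (B y))

lemma sum_autocorrelation_mul_conj (A B : G → R) :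
    ∑ a, (∑ x, A x * conj (A (x * a))) * conj (∑ y, B y * conj (B (y * a)))
      = ∑ w, (∑ u, conj (A u) * B (w * u)) * conj (∑ u, conj (A u) * B (w * u)) := by
  simp only [map_sum, sum_mul_sum, map_mul, starRingEnd_self_apply]
  calc _ = ∑ x, ∑ y, ∑ a, A x * conj (A (x * a)) * (conj (B y) * B (y * a)) := by
          rw [sum_comm]; exact sum_congr rfl fun _ _ => sum_comm
    _ = ∑ v, ∑ w, ∑ u, conj (A u) * B (w * u) * (A v * conj (B (w * v))) := by
          refine sum_congr rfl fun v _ => ?_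
          rw [← Equiv.sum_comp (Equiv.mulRight v)]
          refine sum_congr rfl fun w _ => ?_
          rw [← Equiv.sum_comp (Equiv.mulLeft v⁻¹)]
          refine sum_congr rfl fun u _ => ?_
          simp only [Equiv.coe_mulRight, Equiv.coe_mulLeft, mul_assoc, mul_inv_cancel_left]
          ring
    _ = _ := by
          rw [sum_comm]; exact sum_congr rfl fun _ _ => sum_comm

lemma sum_autocorrelation_mul_conj_nonneg [PartialOrder R] [StarOrderedRing R] (A B : G → R) :
    0 ≤ ∑ a, (∑ x, A x * conj (A (x * a))) * conj (∑ y, B y * conj (B (y * a))) := by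
  rw [sum_autocorrelation_mul_conj]
  exact sum_nonneg fun w _ => mul_star_self_nonneg _

end Correlation

lemma scalarK_succ {G : Type*} [Group G] [Fintype G] (k : ℕ) (f g : G → ℂ) :
    scalarK (k + 1) f g = ∑ s : Fin k → G, ∑ a,
      (∑ x, twist f s x * conj (twist f s (x * a))) *
        conj (∑ y, twist g s y * conj (twist g s (y * a))) := by
  simp only [scalarK, sum_sum_mul_conj_mul_right]
  rw [← Equiv.sum_comp (Fin.consEquiv _), Fintype.sum_prod_type, sum_comm]
  simp only [← twist_cons]
  -- `Fin.consEquiv _ (a, s)` unfolds to `Fin.cons a s`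
  rfl

open scoped ComplexOrder in
/-- for `k ≥ 1` and any `f, g : G → ℂ`, the quantity `⟨f,g⟩_k` is a
nonnegative real number. -/
theorem stmt9 (f g : G → ℂ) (k : ℕ) (hk : 1 ≤ k) :
    0 ≤ scalarK k f g := by
  obtain ⟨k, rfl⟩ := Nat.exists_eq_add_of_le' hk
  rw [scalarK_succ]
  exact sum_nonneg fun s _ => sum_autocorrelation_mul_conj_nonneg _ _
end

section
/- Let G be a finite group, A ⊆ G with |A| = δ|G|, ε ∈ (0,1], and suppose that for every nontrivial irreducible unitary representation ρ of G the operator norm of the Fourier transform satisfies ‖Σ_{a∈A} ρ(a)‖_op ≤ ε|A|. Then for any subsets H, H* ⊆ G with 1 ∈ H* and |HH*| ≤ |H| + K|H*|, one has | |A ∩ H| − |A||H|/|G| | ≤ 2K|H*| + ε|A|·√(|H|/|H*| + K). -/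
open Finset
open scoped Pointwise

/-!
Let `g = (1_H ∗ 1_{H*}) / |H*|`. Then `|A ∩ H| - |A||H|/|G|` is the sum of
`Σ_{a ∈ A} (1_H - g)(a)` and `Σ_{a ∈ A} g(a) - |A||H|/|G|`.

Since `0 ≤ g ≤ 1`, `Σ g = |H|` and `g` vanishes off `HH*`, the first term is at most
`‖1_H - g‖₁ ≤ 2|HH* \ H| ≤ 2K|H*|`.

The second term is `⟪1_H, Σ_{a ∈ A} λ(a) w⟫`, where `λ` is the left regular representation and `w`
is `1_{H*⁻¹}` minus its mean. On functions of mean zero `λ` has no nonzero invariant vectors, so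
the Fourier hypothesis and Cauchy–Schwarz bound it by `ε|A| ‖1_H‖ ‖w‖ ≤ ε|A| √(|H|/|H*|)`.
-/

def IsFourierUniform {G : Type*} [Group G] (A : Finset G) (ε : ℝ) : Prop :=
  ∀ (d : ℕ) (ρ : G →* unitary (EuclideanSpace ℂ (Fin d) →L[ℂ] EuclideanSpace ℂ (Fin d))),
    (∀ v : EuclideanSpace ℂ (Fin d),
      (∀ g : G, (ρ g : EuclideanSpace ℂ (Fin d) →L[ℂ] EuclideanSpace ℂ (Fin d)) v = v) → v = 0) →
    ‖∑ a ∈ A, (ρ a : EuclideanSpace ℂ (Fin d) →L[ℂ] EuclideanSpace ℂ (Fin d))‖ ≤ ε * #A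

section Restrict

variable {G 𝕜 E : Type*} [Group G] [RCLike 𝕜] [NormedAddCommGroup E] [InnerProductSpace 𝕜 E]

def MonoidHom.restrictLinearIsometryEquiv (ρ : G →* (E ≃ₗᵢ[𝕜] E)) (V : Submodule 𝕜 E)
    (hV : ∀ g, ∀ v ∈ V, ρ g v ∈ V) : G →* (V ≃ₗᵢ[𝕜] V) where
  toFun g :=
    { toFun v := ⟨ρ g v, hV g v v.2⟩
      invFun v := ⟨ρ g⁻¹ v, hV g⁻¹ v v.2⟩
      map_add' _ _ := by ext; simp
      map_smul' _ _ := by ext; simp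
      left_inv v := by ext; simp [LinearIsometryEquiv.coe_inv]
      right_inv v := by ext; simp [LinearIsometryEquiv.coe_inv]
      norm_map' v := (ρ g).norm_map v }
  map_one' := by ext; simp
  map_mul' _ _ := by ext; simp [LinearIsometryEquiv.coe_mul]

@[simp]
lemma MonoidHom.coe_restrictLinearIsometryEquiv_apply (ρ : G →* (E ≃ₗᵢ[𝕜] E))
    (V : Submodule 𝕜 E) (hV : ∀ g, ∀ v ∈ V, ρ g v ∈ V) (g : G) (v : V) :
    (ρ.restrictLinearIsometryEquiv V hV g v : E) = ρ g v := rfl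

end Restrict

namespace IsFourierUniform

variable {G : Type*} [Group G] {A : Finset G} {ε : ℝ}

lemma mul_card_nonneg (hA : IsFourierUniform A ε) : 0 ≤ ε * #A :=
  (norm_nonneg _).trans (hA 0 1 fun v _ => Subsingleton.elim v 0)

theorem norm_sum_apply_le (hA : IsFourierUniform A ε)
    {E : Type*} [NormedAddCommGroup E] [InnerProductSpace ℂ E] [FiniteDimensional ℂ E]
    (ρ : G →* (E ≃ₗᵢ[ℂ] E)) (hρ : ∀ v, (∀ g, ρ g v = v) → v = 0) (v : E) :
    ‖∑ a ∈ A, ρ a v‖ ≤ ε * #A * ‖v‖ := by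
  let F := EuclideanSpace ℂ (Fin (Module.finrank ℂ E))
  let e : E ≃ₗᵢ[ℂ] F := (stdOrthonormalBasis ℂ E).repr
  let σ : G →* unitary (F →L[ℂ] F) := Unitary.linearIsometryEquiv.symm.toMonoidHom.comp
    { toFun g := e.symm.trans ((ρ g).trans e)
      map_one' := by ext; simp
      map_mul' _ _ := by ext; simp [LinearIsometryEquiv.coe_mul] }
  have hσ (g : G) (w : F) : (σ g : F →L[ℂ] F) w = e (ρ g (e.symm w)) := rfl
  have hσ_fixed : ∀ w, (∀ g, (σ g : F →L[ℂ] F) w = w) → w = 0 := fun w hw => by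
    simpa using congr(e $(hρ (e.symm w) fun g => by simpa [hσ] using congr(e.symm $(hw g))))
  calc ‖∑ a ∈ A, ρ a v‖ = ‖(∑ a ∈ A, (σ a : F →L[ℂ] F)) (e v)‖ := by
        rw [_root_.sum_apply]
        simp only [hσ, LinearIsometryEquiv.symm_apply_apply, ← map_sum, e.norm_map]
    _ ≤ ε * #A * ‖v‖ := by
        refine (ContinuousLinearMap.le_opNorm _ _).trans ?_
        rw [e.norm_map]
        gcongr
        exact hA _ σ hσ_fixed

end IsFourierUniform

section FiniteSums

variable {ι : Type*} [Fintype ι]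

variable (ι) in
def sumZero : Submodule ℂ (EuclideanSpace ℂ ι) where
  carrier := {v | ∑ i, v i = 0}
  add_mem' hv hw := by simp_all [sum_add_distrib]
  zero_mem' := by simp
  smul_mem' c v hv := by simp_all [← mul_sum]

lemma mem_sumZero {v : EuclideanSpace ℂ ι} : v ∈ sumZero ι ↔ ∑ i, v i = 0 := Iff.rfl

lemma norm_toLp_ofReal (u : ι → ℝ) :
    ‖(WithLp.toLp 2 fun i => (u i : ℂ) : EuclideanSpace ℂ ι)‖ = √(∑ i, u i ^ 2) := by
  simp [EuclideanSpace.norm_eq]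

lemma sum_sub_mean_sq_le (f : ι → ℝ) :
    ∑ i, (f i - (∑ j, f j) / Fintype.card ι) ^ 2 ≤ ∑ i, f i ^ 2 := by
  rcases isEmpty_or_nonempty ι with hι | hι
  · simp
  have hn : (0 : ℝ) < Fintype.card ι := by exact_mod_cast Fintype.card_pos
  simp only [sub_sq, sum_add_distrib, sum_sub_distrib, ← sum_mul, ← mul_sum, sum_const,
    card_univ, nsmul_eq_mul]
  field_simp
  nlinarith [sq_nonneg (∑ j, f j)]

lemma sum_abs_ite_mem_sub_le [DecidableEq ι] (H P : Finset ι) (g : ι → ℝ)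
    (hg₀ : ∀ i, 0 ≤ g i) (hg₁ : ∀ i, g i ≤ 1) (hgP : ∀ i ∉ P, g i = 0) (hsum : ∑ i, g i = #H) :
    ∑ i, |(if i ∈ H then 1 else 0) - g i| ≤ 2 * #(P \ H) := by
  have hout : ∑ i ∈ Hᶜ, g i ≤ #(P \ H) :=
    calc ∑ i ∈ Hᶜ, g i = ∑ i ∈ P \ H, g i :=
          (sum_subset (fun i hi => by simp_all) fun i _ hi => hgP i (by simp_all)).symm
      _ ≤ ∑ i ∈ P \ H, 1 := sum_le_sum fun i _ => hg₁ i
      _ = #(P \ H) := by simp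
  have hin : ∑ i ∈ H, (1 - g i) = ∑ i ∈ Hᶜ, g i := by
    rw [sum_sub_distrib, sum_const, nsmul_one]
    linarith [sum_add_sum_compl H g]
  rw [← sum_add_sum_compl H]
  calc ∑ i ∈ H, |(if i ∈ H then 1 else 0) - g i| + ∑ i ∈ Hᶜ, |(if i ∈ H then 1 else 0) - g i|
      = ∑ i ∈ H, (1 - g i) + ∑ i ∈ Hᶜ, g i := by
        congr 1 <;> refine sum_congr rfl fun i hi => ?_
        · rw [if_pos hi, abs_of_nonneg (sub_nonneg.2 (hg₁ i))]
        · rw [if_neg (mem_compl.1 hi), zero_sub, abs_neg, abs_of_nonneg (hg₀ i)]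
    _ ≤ 2 * #(P \ H) := by linarith

end FiniteSums

section Regular

variable (G : Type*) [Group G] [Fintype G]

noncomputable def leftRegular : G →* (EuclideanSpace ℂ G ≃ₗᵢ[ℂ] EuclideanSpace ℂ G) where
  toFun g := LinearIsometryEquiv.piLpCongrLeft 2 ℂ ℂ (Equiv.mulLeft g)
  map_one' := by
    ext; simp [LinearIsometryEquiv.piLpCongrLeft_apply, Equiv.piCongrLeft'_apply]; rfl
  map_mul' _ _ := by
    ext
    simp [LinearIsometryEquiv.piLpCongrLeft_apply, Equiv.piCongrLeft'_apply,
      LinearIsometryEquiv.coe_mul, Equiv.Perm.mul_def]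

variable {G}

@[simp]
lemma leftRegular_apply (g : G) (v : EuclideanSpace ℂ G) (x : G) :
    leftRegular G g v x = v (g⁻¹ * x) := by
  simp [leftRegular, LinearIsometryEquiv.piLpCongrLeft_apply, Equiv.piCongrLeft'_apply]

lemma leftRegular_mem_sumZero (g : G) {v : EuclideanSpace ℂ G} (hv : v ∈ sumZero G) :
    leftRegular G g v ∈ sumZero G := by
  rw [mem_sumZero] at hv ⊢
  simp only [leftRegular_apply]
  rw [← hv]
  exact Equiv.sum_comp (Equiv.mulLeft g⁻¹) _

variable (G) in
noncomputable def sumZeroRegular : G →* (sumZero G ≃ₗᵢ[ℂ] sumZero G) :=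
  (leftRegular G).restrictLinearIsometryEquiv (sumZero G) fun g _ => leftRegular_mem_sumZero g

lemma eq_zero_of_forall_sumZeroRegular_apply_eq (v : sumZero G)
    (hv : ∀ g, sumZeroRegular G g v = v) : v = 0 := by
  have hconst (x : G) : (v : EuclideanSpace ℂ G) x = (v : EuclideanSpace ℂ G) 1 := by
    have := congr(($(hv x⁻¹) : EuclideanSpace ℂ G) 1)
    rwa [sumZeroRegular, MonoidHom.coe_restrictLinearIsometryEquiv_apply, leftRegular_apply,
      inv_inv, mul_one] at this
  have hsum : (Fintype.card G : ℂ) * (v : EuclideanSpace ℂ G) 1 = 0 := by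
    have := mem_sumZero.mp v.2
    rw [sum_congr rfl fun x _ => hconst x] at this
    simpa using this
  ext x
  simpa [hconst x] using hsum

variable {A : Finset G} {ε : ℝ}

theorem IsFourierUniform.norm_sum_leftRegular_le (hA : IsFourierUniform A ε)
    (v : EuclideanSpace ℂ G) (hv : ∑ x, v x = 0) :
    ‖∑ a ∈ A, leftRegular G a v‖ ≤ ε * #A * ‖v‖ := by
  have key := hA.norm_sum_apply_le (E := sumZero G) (sumZeroRegular G)
    (fun w hw => eq_zero_of_forall_sumZeroRegular_apply_eq w hw) ⟨v, hv⟩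
  rw [← Submodule.norm_coe, Submodule.coe_sum, Submodule.coe_norm] at key
  exact key

theorem IsFourierUniform.abs_sum_sum_mul_le (hA : IsFourierUniform A ε) (u w : G → ℝ)
    (hw : ∑ x, w x = 0) :
    |∑ a ∈ A, ∑ y, u y * w (a⁻¹ * y)| ≤ ε * #A * (√(∑ y, u y ^ 2) * √(∑ y, w y ^ 2)) := by
  set U : EuclideanSpace ℂ G := WithLp.toLp 2 fun x => (u x : ℂ)
  set W : EuclideanSpace ℂ G := WithLp.toLp 2 fun x => (w x : ℂ)
  have hW : ∑ x, W x = 0 := by simp [W]; exact_mod_cast hw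
  have hinner : inner ℂ U (∑ a ∈ A, leftRegular G a W) =
      ((∑ a ∈ A, ∑ y, u y * w (a⁻¹ * y) : ℝ) : ℂ) := by
    simp [U, W, PiLp.inner_apply, mul_comm]
  calc |∑ a ∈ A, ∑ y, u y * w (a⁻¹ * y)| = ‖inner ℂ U (∑ a ∈ A, leftRegular G a W)‖ := by
        rw [hinner, Complex.norm_real, Real.norm_eq_abs]
    _ ≤ ‖U‖ * ‖∑ a ∈ A, leftRegular G a W‖ := norm_inner_le_norm _ _
    _ ≤ ‖U‖ * (ε * #A * ‖W‖) := by gcongr; exact hA.norm_sum_leftRegular_le W hW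
    _ = ε * #A * (√(∑ y, u y ^ 2) * √(∑ y, w y ^ 2)) := by
        rw [norm_toLp_ofReal, norm_toLp_ofReal]; ring

theorem IsFourierUniform.abs_sum_sum_mul_sub_le (hA : IsFourierUniform A ε) (u f : G → ℝ) :
    |∑ a ∈ A, ∑ y, u y * f (a⁻¹ * y) - #A * (∑ y, u y) * (∑ y, f y) / Fintype.card G| ≤
      ε * #A * (√(∑ y, u y ^ 2) * √(∑ y, f y ^ 2)) := by
  have hn : (0 : ℝ) < Fintype.card G := by exact_mod_cast Fintype.card_pos
  set c := (∑ y, f y) / Fintype.card G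
  have hcentered : ∑ x, (f x - c) = 0 := by
    simp [sum_sub_distrib, c]
    field_simp
    ring
  have hsum : ∑ a ∈ A, ∑ y, u y * (f (a⁻¹ * y) - c) =
      ∑ a ∈ A, ∑ y, u y * f (a⁻¹ * y) - #A * (∑ y, u y) * (∑ y, f y) / Fintype.card G := by
    simp only [mul_sub, sum_sub_distrib, ← sum_mul, sum_const, nsmul_eq_mul, c]
    ring
  rw [← hsum]
  refine (hA.abs_sum_sum_mul_le u (fun x => f x - c) hcentered).trans ?_
  exact mul_le_mul_of_nonneg_left (mul_le_mul_of_nonneg_left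
    (Real.sqrt_le_sqrt (sum_sub_mean_sq_le f)) (Real.sqrt_nonneg _)) hA.mul_card_nonneg

end Regular

section Convolution

variable {G : Type*} [Group G] [DecidableEq G]

/-- `(1_H ∗ 1_S)(x)`, the number of ways to write `x = h * s` with `h ∈ H`, `s ∈ S`. -/
def convIndicator (H S : Finset G) (x : G) : ℝ := ∑ y ∈ H, if y⁻¹ * x ∈ S then 1 else 0

lemma convIndicator_nonneg (H S : Finset G) (x : G) : 0 ≤ convIndicator H S x :=
  sum_nonneg fun _ _ => by positivity

lemma convIndicator_eq_zero_of_notMem_mul {H S : Finset G} {x : G} (hx : x ∉ H * S) :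
    convIndicator H S x = 0 :=
  sum_eq_zero fun y hy => if_neg fun hyx => hx <| by
    simpa using mul_mem_mul hy hyx

variable [Fintype G]

lemma convIndicator_le_card (H S : Finset G) (x : G) : convIndicator H S x ≤ #S := by
  calc convIndicator H S x ≤ ∑ y, if y⁻¹ * x ∈ S then (1 : ℝ) else 0 :=
        sum_le_univ_sum_of_nonneg fun _ => by positivity
    _ = #S := by
        rw [← Equiv.sum_comp ((Equiv.inv G).trans (Equiv.mulLeft x))]
        simp

lemma sum_convIndicator (H S : Finset G) : ∑ x, convIndicator H S x = #H * #S := by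
  have hrow (y : G) : ∑ x, (if y⁻¹ * x ∈ S then (1 : ℝ) else 0) = #S := by
    rw [← Equiv.sum_comp (Equiv.mulLeft y)]
    simp
  simp only [convIndicator]
  rw [sum_comm]
  simp [hrow]

lemma sum_abs_ite_mem_sub_convIndicator_div_le {H S : Finset G} (hS : (1 : G) ∈ S) :
    ∑ x, |(if x ∈ H then 1 else 0) - convIndicator H S x / #S| ≤ 2 * ((#(H * S) : ℝ) - #H) := by
  have hS₀ : (0 : ℝ) < #S := by exact_mod_cast card_pos.2 ⟨1, hS⟩
  have hHS : H ⊆ H * S := subset_mul_left H hS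
  have := sum_abs_ite_mem_sub_le H (H * S) (fun x => convIndicator H S x / #S)
    (fun x => div_nonneg (convIndicator_nonneg H S x) hS₀.le)
    (fun x => div_le_one_of_le₀ (convIndicator_le_card H S x) hS₀.le)
    (fun x hx => by simp [convIndicator_eq_zero_of_notMem_mul hx])
    (by rw [← sum_div, sum_convIndicator]; field_simp)
  rwa [card_sdiff_of_subset hHS, Nat.cast_sub (card_le_card hHS)] at this

theorem IsFourierUniform.abs_sum_convIndicator_div_sub_le {A : Finset G} {ε : ℝ}
    (hA : IsFourierUniform A ε) (H : Finset G) {S : Finset G} (hS : S.Nonempty) :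
    |∑ a ∈ A, convIndicator H S a / #S - #A * #H / Fintype.card G| ≤ ε * #A * √(#H / #S) := by
  have hS₀ : (0 : ℝ) < #S := by exact_mod_cast hS.card_pos
  have hH : ∑ x, (if x ∈ H then (1 : ℝ) else 0) = #H := by simp
  have hS_inv : ∑ x : G, (if x⁻¹ ∈ S then (1 : ℝ) else 0) = #S := by
    rw [← Equiv.sum_comp (Equiv.inv G)]
    simp
  have hconv (a : G) :
      ∑ y, (if y ∈ H then (1 : ℝ) else 0) * (if (a⁻¹ * y)⁻¹ ∈ S then 1 else 0) =
        convIndicator H S a := by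
    simp only [ite_zero_mul, one_mul, sum_ite_mem, univ_inter, mul_inv_rev, inv_inv,
      convIndicator]
  have key := hA.abs_sum_sum_mul_sub_le (fun y => if y ∈ H then 1 else 0)
    (fun x => if x⁻¹ ∈ S then 1 else 0)
  simp only [hconv, ite_pow, one_pow, ne_eq, OfNat.ofNat_ne_zero, not_false_eq_true, zero_pow,
    hS_inv, hH] at key
  have hdiv : ∑ a ∈ A, convIndicator H S a / #S - #A * #H / Fintype.card G =
      (∑ a ∈ A, convIndicator H S a - #A * #H * #S / Fintype.card G) / #S := by
    rw [← sum_div]; field_simp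
  rw [hdiv, abs_div, abs_of_pos hS₀, div_le_iff₀ hS₀]
  refine key.trans (le_of_eq ?_)
  rw [Real.sqrt_div (Nat.cast_nonneg _)]
  field_simp
  rw [Real.sq_sqrt hS₀.le]

end Convolution

theorem stmt16_general {G : Type*} [Group G] [Fintype G] [DecidableEq G]
    (A : Finset G) (ε : ℝ) (K : ℝ) (hK : 0 ≤ K)
    (hA : ∀ (d : ℕ)
      (ρ : G →* unitary (EuclideanSpace ℂ (Fin d) →L[ℂ] EuclideanSpace ℂ (Fin d))),
      (∀ v : EuclideanSpace ℂ (Fin d),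
        (∀ g : G, (ρ g : EuclideanSpace ℂ (Fin d) →L[ℂ] EuclideanSpace ℂ (Fin d)) v = v) →
          v = 0) →
      ‖∑ a ∈ A, (ρ a : EuclideanSpace ℂ (Fin d) →L[ℂ] EuclideanSpace ℂ (Fin d))‖ ≤
        ε * A.card)
    (H Hs : Finset G) (h1 : (1 : G) ∈ Hs)
    (hHH : ((H * Hs).card : ℝ) ≤ H.card + K * Hs.card) :
    |((A ∩ H).card : ℝ) - (A.card : ℝ) * H.card / Fintype.card G| ≤
      2 * K * Hs.card + ε * A.card * Real.sqrt ((H.card : ℝ) / Hs.card + K) := by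
  have hA : IsFourierUniform A ε := hA
  set g : G → ℝ := fun x => convIndicator H Hs x / #Hs
  have hsplit : ((A ∩ H).card : ℝ) - A.card * H.card / Fintype.card G =
      ∑ a ∈ A, ((if a ∈ H then 1 else 0) - g a) + (∑ a ∈ A, g a - #A * #H / Fintype.card G) := by
    rw [sum_sub_distrib, sum_boole, filter_mem_eq_inter]
    ring
  calc |((A ∩ H).card : ℝ) - A.card * H.card / Fintype.card G|
      ≤ |∑ a ∈ A, ((if a ∈ H then 1 else 0) - g a)| +
          |∑ a ∈ A, g a - #A * #H / Fintype.card G| := by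
        rw [hsplit]; exact abs_add_le _ _
    _ ≤ ∑ x, |(if x ∈ H then 1 else 0) - g x| + ε * #A * √(#H / #Hs) :=
        add_le_add
          ((abs_sum_le_sum_abs _ _).trans (sum_le_univ_sum_of_nonneg fun _ => abs_nonneg _))
          (hA.abs_sum_convIndicator_div_sub_le H ⟨1, h1⟩)
    _ ≤ 2 * K * Hs.card + ε * A.card * √(H.card / Hs.card + K) :=
        add_le_add (by linarith [sum_abs_ite_mem_sub_convIndicator_div_le (H := H) h1])
          (mul_le_mul_of_nonneg_left (Real.sqrt_le_sqrt (by linarith)) hA.mul_card_nonneg)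

/-- the non-commutative Weyl-type uniform distribution statement.  If the
Fourier transform of `A` at every nontrivial irreducible unitary representation (equivalently,
at every unitary representation containing no invariant vectors) has operator norm at most
`ε|A|`, then for all `H, H* ⊆ G` with `1 ∈ H*` and `|HH*| ≤ |H| + K|H*|`,
`| |A ∩ H| − |A||H|/|G| | ≤ 2K|H*| + ε|A|√(|H|/|H*| + K)`. -/
theorem stmt16 {G : Type*} [Group G] [Fintype G] [DecidableEq G]
    (A : Finset G) (ε : ℝ) (hε : 0 < ε) (hε1 : ε ≤ 1) (K : ℝ) (hK : 0 ≤ K)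
    (hA : ∀ (d : ℕ)
      (ρ : G →* unitary (EuclideanSpace ℂ (Fin d) →L[ℂ] EuclideanSpace ℂ (Fin d))),
      (∀ v : EuclideanSpace ℂ (Fin d),
        (∀ g : G, (ρ g : EuclideanSpace ℂ (Fin d) →L[ℂ] EuclideanSpace ℂ (Fin d)) v = v) →
          v = 0) →
      ‖∑ a ∈ A, (ρ a : EuclideanSpace ℂ (Fin d) →L[ℂ] EuclideanSpace ℂ (Fin d))‖ ≤
        ε * A.card)
    (H Hs : Finset G) (h1 : (1 : G) ∈ Hs)
    (hHH : ((H * Hs).card : ℝ) ≤ H.card + K * Hs.card) :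
    |((A ∩ H).card : ℝ) - (A.card : ℝ) * H.card / Fintype.card G| ≤
      2 * K * Hs.card + ε * A.card * Real.sqrt ((H.card : ℝ) / Hs.card + K) :=
  stmt16_general A ε K hK hA H Hs h1 hHH
end

section
/- For any δ ∈ (0,1/2] and any unitary representation ρ of a finite group G, there exists δ₁ ∈ [δ, 2δ] such that the Bohr set Bohr(ρ,δ₁) is regular, meaning | |Bohr(ρ,(1+κ)δ₁)| − |Bohr(ρ,δ₁)| | ≤ 100 d_ρ² |κ| · |Bohr(ρ,δ₁)| whenever |κ| ≤ 1/(100 d_ρ²). -/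
/-!
On the logarithmic scale, `f s = log |Bohr(ρ, e^s)|` is nondecreasing and right-continuous,
and a packing argument in the `2 d²`-dimensional real space of operators gives
`|Bohr(ρ, 2r)| ≤ 5^(2 d²) |Bohr(ρ, r)|`, so `f` increases by at most `2 d² log 5` over
`[log δ, log 2δ]`. A Vitali covering argument then finds `s` in this interval at which `f` has
slope at most `50 d²` to both sides at every scale up to `2 / (100 d²)`; for `δ₁ = e^s` this is
the regularity estimate.
-/

open Set MeasureTheory Metric in
theorem Real.ofReal_sub_le_tsum_of_Icc_subset {ι : Type*} {w : Set ι} (hw : w.Countable)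
    {c r : ι → ℝ} {a b : ℝ} (hcov : Icc a b ⊆ ⋃ i ∈ w, closedBall (c i) (r i)) :
    ENNReal.ofReal (b - a) ≤ ∑' i : w, ENNReal.ofReal (2 * r i) := calc
  ENNReal.ofReal (b - a) = volume (Icc a b) := Real.volume_Icc.symm
  _ ≤ volume (⋃ i ∈ w, closedBall (c i) (r i)) := measure_mono hcov
  _ ≤ ∑' i : w, volume (closedBall (c i) (r i)) := measure_biUnion_le _ hw _
  _ = ∑' i : w, ENNReal.ofReal (2 * r i) := by simp only [Real.volume_closedBall]

namespace StieltjesFunction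

open Set MeasureTheory Metric

theorem exists_closedBall_of_increment_gt (f : StieltjesFunction ℝ) {a b u₀ K s u : ℝ}
    (hs : s ∈ Icc a b) (hu : u ∈ Ioc 0 u₀)
    (hbad : K * u < f (s + u) - f s ∨ K * u < f s - f (s - u)) :
    ∃ c r : ℝ, 0 < r ∧ r ≤ u₀ ∧ s ∈ closedBall c r ∧
      Ioc (c - r) (c + r) ⊆ Ioc (a - u₀) (b + u₀) ∧ 2 * K * r < f (c + r) - f (c - r) := by
  obtain ⟨has, hsb⟩ := hs
  obtain ⟨hu0, huu₀⟩ := hu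
  rcases hbad with hright | hleft
  · refine ⟨s + u / 2, u / 2, by linarith, by linarith, ?_, ?_, ?_⟩
    · rw [Real.closedBall_eq_Icc]; constructor <;> linarith
    · exact Ioc_subset_Ioc (by linarith) (by linarith)
    · rw [show s + u / 2 + u / 2 = s + u by ring, add_sub_cancel_right]
      linarith
  · refine ⟨s - u / 2, u / 2, by linarith, by linarith, ?_, ?_, ?_⟩
    · rw [Real.closedBall_eq_Icc]; constructor <;> linarith
    · exact Ioc_subset_Ioc (by linarith) (by linarith)
    · rw [sub_add_cancel, show s - u / 2 - u / 2 = s - u by ring]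
      linarith

theorem tsum_increment_le {ι : Type*} (f : StieltjesFunction ℝ) {w : Set ι} (hw : w.Countable)
    {c r : ι → ℝ} (hdisj : w.PairwiseDisjoint fun i => closedBall (c i) (r i)) {p q : ℝ}
    (hsub : ∀ i ∈ w, Ioc (c i - r i) (c i + r i) ⊆ Ioc p q) :
    ∑' i : w, ENNReal.ofReal (f (c i + r i) - f (c i - r i)) ≤ ENNReal.ofReal (f q - f p) := calc
  ∑' i : w, ENNReal.ofReal (f (c i + r i) - f (c i - r i))
      = ∑' i : w, f.measure (Ioc (c i - r i) (c i + r i)) := by simp only [f.measure_Ioc]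
  _ = f.measure (⋃ i ∈ w, Ioc (c i - r i) (c i + r i)) := by
    refine (measure_biUnion (f := fun i => Ioc (c i - r i) (c i + r i)) hw ?_
      fun _ _ => measurableSet_Ioc).symm
    refine hdisj.mono fun i => ?_
    simp only [Real.closedBall_eq_Icc]
    exact Ioc_subset_Icc_self
  _ ≤ f.measure (Ioc p q) := measure_mono (iUnion₂_subset hsub)
  _ = ENNReal.ofReal (f q - f p) := f.measure_Ioc _ _

/- If every point of `[a, b]` had a bad scale, Vitali's lemma would yield disjoint intervals with
large increments whose 4-fold enlargements cover `[a, b]`. -/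
theorem exists_forall_increment_le (f : StieltjesFunction ℝ) {a b u₀ K : ℝ} (hab : a ≤ b)
    (hK : 0 ≤ K) (h : 4 * (f (b + u₀) - f (a - u₀)) < K * (b - a)) :
    ∃ s ∈ Icc a b, ∀ u ∈ Icc 0 u₀, f (s + u) - f s ≤ K * u ∧ f s - f (s - u) ≤ K * u := by
  by_contra! hbad
  have key : ∀ s ∈ Icc a b, ∃ c r : ℝ, 0 < r ∧ r ≤ u₀ ∧ s ∈ closedBall c r ∧
      Ioc (c - r) (c + r) ⊆ Ioc (a - u₀) (b + u₀) ∧ 2 * K * r < f (c + r) - f (c - r) :=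
      fun s hs => by
    obtain ⟨u, ⟨hu0, huu₀⟩, hsu⟩ := hbad s hs
    have hu : 0 < u := hu0.lt_of_ne <| by rintro rfl; simp at hsu
    exact f.exists_closedBall_of_increment_gt hs ⟨hu, huu₀⟩ ((lt_or_ge _ _).imp_right hsu)
  choose! c r hr hru hsc hsub hinc using key
  obtain ⟨w, hw, hdisj, hcov⟩ := Vitali.exists_disjoint_subfamily_covering_enlargement_closedBall
    (Icc a b) c r u₀ hru 4 (by norm_num)
  have hwc : w.Countable := hdisj.countable_of_nonempty_interior fun i hi => by
    rw [interior_closedBall _ (hr i (hw hi)).ne']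
    exact ⟨c i, mem_ball_self (hr i (hw hi))⟩
  have hvol := Real.ofReal_sub_le_tsum_of_Icc_subset hwc (r := fun i => 4 * r i) fun s hs => by
    obtain ⟨i, hi, hsi⟩ := hcov s hs
    exact mem_biUnion hi (hsi (hsc s hs))
  have hincr : ∑' i : w, ENNReal.ofReal (2 * K * r i) ≤
      ENNReal.ofReal (f (b + u₀) - f (a - u₀)) :=
    (ENNReal.tsum_le_tsum fun i : w => ENNReal.ofReal_le_ofReal (hinc i (hw i.2)).le).trans
      (f.tsum_increment_le hwc hdisj fun i hi => hsub i (hw hi))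
  have : ENNReal.ofReal (K * (b - a)) ≤ ENNReal.ofReal (4 * (f (b + u₀) - f (a - u₀))) := calc
    ENNReal.ofReal (K * (b - a)) = ENNReal.ofReal K * ENNReal.ofReal (b - a) := ENNReal.ofReal_mul hK
    _ ≤ ENNReal.ofReal K * ∑' i : w, ENNReal.ofReal (2 * (4 * r i)) := mul_le_mul_right hvol _
    _ = 4 * ∑' i : w, ENNReal.ofReal (2 * K * r i) := by
      rw [← ENNReal.tsum_mul_left, ← ENNReal.tsum_mul_left]
      refine tsum_congr fun i => ?_
      rw [← ENNReal.ofReal_mul hK, ← ENNReal.ofReal_ofNat 4, ← ENNReal.ofReal_mul (by norm_num)]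
      ring_nf
    _ ≤ 4 * ENNReal.ofReal (f (b + u₀) - f (a - u₀)) := mul_le_mul_right hincr _
    _ = ENNReal.ofReal (4 * (f (b + u₀) - f (a - u₀))) := by
      rw [ENNReal.ofReal_mul (by norm_num), ENNReal.ofReal_ofNat]
  have hD : 0 ≤ f (b + u₀) - f (a - u₀) := by
    obtain ⟨u, ⟨hu0, huu₀⟩, -⟩ := hbad a ⟨le_rfl, hab⟩
    exact sub_nonneg.2 (f.mono (by linarith))
  exact h.not_ge ((ENNReal.ofReal_le_ofReal_iff (by linarith)).1 this)

end StieltjesFunction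

theorem sub_le_two_mul_mul_of_log_sub_le {P Q y : ℝ} (hP : 0 < P) (hQ : 0 < Q)
    (h : Real.log Q - Real.log P ≤ y) (hy0 : 0 ≤ y) (hy : y ≤ 1 / 2) : Q - P ≤ 2 * y * P := by
  have hQP : Q ≤ P * Real.exp y := by
    rwa [← Real.log_le_log_iff hQ (by positivity), Real.log_mul hP.ne' (Real.exp_pos y).ne',
      Real.log_exp, ← sub_le_iff_le_add']
  have hexp : Real.exp y ≤ 1 + 2 * y := by
    refine (Real.exp_bound_div_one_sub_of_interval hy0 (by linarith)).trans ?_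
    rw [div_le_iff₀ (by linarith)]
    nlinarith
  nlinarith

theorem sub_le_mul_of_log_sub_le {P Q y : ℝ} (hP : 0 < P) (hQ : 0 < Q)
    (h : Real.log P - Real.log Q ≤ y) : P - Q ≤ y * P := by
  have hPQ : P * Real.exp (-y) ≤ Q := by
    rwa [← Real.log_le_log_iff (by positivity) hQ, Real.log_mul hP.ne' (Real.exp_pos _).ne',
      Real.log_exp, ← sub_eq_add_neg, sub_le_comm]
  nlinarith [Real.one_sub_le_exp_neg y]

open Finset Filter Topology
open scoped Pointwise

theorem Finset.exists_subset_pairwise_forall_exists_not {α : Type*} (s : Finset α)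
    {R : α → α → Prop} (hR : ∀ x y, R x y → R y x) (hirr : ∀ x, ¬ R x x) :
    ∃ T ⊆ s, (T : Set α).Pairwise R ∧ ∀ x ∈ s, ∃ t ∈ T, ¬ R x t := by
  classical
  set S : Finset (Finset α) := s.powerset.filter fun T => (T : Set α).Pairwise R
  obtain ⟨T, hT, hmax⟩ : ∃ T, Maximal (· ∈ S) T :=
    Finset.exists_maximal ⟨∅, mem_filter.2 ⟨empty_mem_powerset s, by simp⟩⟩
  obtain ⟨hTs, hTR⟩ := mem_filter.1 hT
  rw [mem_powerset] at hTs
  refine ⟨T, hTs, hTR, fun x hx => ?_⟩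
  by_contra! hxT
  have hins : insert x T ∈ S := by
    rw [mem_filter, mem_powerset, coe_insert]
    exact ⟨insert_subset hx hTs, hTR.insert fun t ht _ => ⟨hxT t ht, hR _ _ (hxT t ht)⟩⟩
  exact hirr x (hxT x (hmax hins (subset_insert x T) (mem_insert_self x T)))

theorem Unitary.norm_mul_sub_mul {A : Type*} [NormedRing A] [StarRing A] [CStarRing A]
    (U : unitary A) (x y : A) : ‖(U : A) * x - U * y‖ = ‖x - y‖ := by
  rw [← mul_sub, CStarRing.norm_coe_unitary_mul]

section BohrSets

variable {G A : Type*} [Group G] [Fintype G] [NormedRing A] [StarRing A]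

noncomputable def bohrSet (ρ : G →* unitary A) (t : ℝ) : Finset G :=
  {g | ‖(ρ g : A) - 1‖ ≤ t}

namespace bohrSet

variable (ρ : G →* unitary A)

theorem mem_iff {t : ℝ} {g : G} : g ∈ bohrSet ρ t ↔ ‖(ρ g : A) - 1‖ ≤ t := by
  simp [bohrSet]

theorem card_eq (t : ℝ) : #(bohrSet ρ t) = Nat.card {g : G // ‖(ρ g : A) - 1‖ ≤ t} := by
  rw [Nat.card_eq_fintype_card, Fintype.card_subtype, bohrSet]

theorem one_mem {t : ℝ} (ht : 0 ≤ t) : 1 ∈ bohrSet ρ t := by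
  simpa [mem_iff] using ht

theorem cast_card_pos {t : ℝ} (ht : 0 ≤ t) : (0 : ℝ) < #(bohrSet ρ t) :=
  Nat.cast_pos.2 (card_pos.2 ⟨1, one_mem ρ ht⟩)

theorem mono {t t' : ℝ} (h : t ≤ t') : bohrSet ρ t ⊆ bohrSet ρ t' := fun _ hg =>
  (mem_iff ρ).2 (((mem_iff ρ).1 hg).trans h)

theorem eventually_eq (t : ℝ) : ∀ᶠ t' in 𝓝[≥] t, bohrSet ρ t' = bohrSet ρ t := by
  have : ∀ᶠ t' in 𝓝[≥] t, ∀ g : G, (‖(ρ g : A) - 1‖ ≤ t' ↔ ‖(ρ g : A) - 1‖ ≤ t) := by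
    refine Filter.eventually_all.2 fun g => ?_
    by_cases hg : ‖(ρ g : A) - 1‖ ≤ t
    · filter_upwards [self_mem_nhdsWithin] with t' ht'
      exact iff_of_true (hg.trans ht') hg
    · filter_upwards [nhdsWithin_le_nhds (eventually_lt_nhds (not_le.1 hg))] with t' ht'
      exact iff_of_false ht'.not_ge hg
  filter_upwards [this] with t' ht'
  ext g
  simp only [mem_iff, ht']

/- On the logarithmic scale `s = log t`, dilating the radius becomes a translation. -/
noncomputable def logCardExp : StieltjesFunction ℝ where
  toFun s := Real.log #(bohrSet ρ (Real.exp s))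
  mono' s s' h := Real.log_le_log (cast_card_pos ρ (Real.exp_pos s).le)
    (Nat.cast_le.2 (card_le_card (mono ρ (Real.exp_le_exp.2 h))))
  right_continuous' s := by
    have hexp : Tendsto Real.exp (𝓝[≥] s) (𝓝[≥] (Real.exp s)) :=
      Real.continuous_exp.continuousWithinAt.tendsto_nhdsWithin fun _ hx => Real.exp_le_exp.2 hx
    refine continuousWithinAt_const.congr_of_eventuallyEq ?_ rfl
    filter_upwards [hexp.eventually (eventually_eq ρ _)] with s' hs'
    simp only [hs']

theorem logCardExp_apply (s : ℝ) : logCardExp ρ s = Real.log #(bohrSet ρ (Real.exp s)) := rfl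

theorem abs_card_sub_le_of_increment_le {s K ε : ℝ} (hK : 0 ≤ K) (hε : ε ≤ 1 / 2)
    (hKε : K * ε ≤ 1 / 2)
    (hs : ∀ u ∈ Set.Icc 0 (2 * ε), logCardExp ρ (s + u) - logCardExp ρ s ≤ K * u ∧
      logCardExp ρ s - logCardExp ρ (s - u) ≤ K * u)
    {κ : ℝ} (hκ : |κ| ≤ ε) :
    |(#(bohrSet ρ ((1 + κ) * Real.exp s)) : ℝ) - #(bohrSet ρ (Real.exp s))| ≤
      2 * K * |κ| * #(bohrSet ρ (Real.exp s)) := by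
  have hκ' := abs_le.1 hκ
  have h1κ : 0 < 1 + κ := by linarith
  have hpos : ∀ t, 0 < t → (0 : ℝ) < #(bohrSet ρ t) := fun t ht => cast_card_pos ρ ht.le
  rcases le_or_gt 0 κ with hκ0 | hκ0
  · have hu0 : 0 ≤ Real.log (1 + κ) := Real.log_nonneg (by linarith)
    have huκ : Real.log (1 + κ) ≤ κ := by linarith [Real.log_le_sub_one_of_pos h1κ]
    have hinc := (hs _ ⟨hu0, by linarith⟩).1
    rw [logCardExp_apply, logCardExp_apply, Real.exp_add, Real.exp_log h1κ, mul_comm] at hinc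
    have hmono : (#(bohrSet ρ (Real.exp s)) : ℝ) ≤ #(bohrSet ρ ((1 + κ) * Real.exp s)) :=
      Nat.cast_le.2 (card_le_card (mono ρ (le_mul_of_one_le_left (Real.exp_pos s).le (by linarith))))
    rw [abs_of_nonneg (sub_nonneg.2 hmono), abs_of_nonneg hκ0]
    refine sub_le_two_mul_mul_of_log_sub_le (hpos _ (Real.exp_pos s)) (hpos _ (by positivity))
      (hinc.trans (mul_le_mul_of_nonneg_left huκ hK)) (by positivity) ?_ |>.trans_eq (by ring)
    nlinarith
  · have hu0 : 0 ≤ -Real.log (1 + κ) := neg_nonneg.2 (Real.log_nonpos h1κ.le (by linarith))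
    have huκ : -Real.log (1 + κ) ≤ 2 * -κ := by
      have hinv : (1 + κ)⁻¹ ≤ 1 - 2 * κ := by
        rw [inv_le_iff_one_le_mul₀ h1κ]
        nlinarith
      linarith [Real.one_sub_inv_le_log_of_pos h1κ]
    have hinc := (hs _ ⟨hu0, by linarith⟩).2
    rw [logCardExp_apply, logCardExp_apply, sub_neg_eq_add, Real.exp_add, Real.exp_log h1κ,
      mul_comm] at hinc
    have hmono : (#(bohrSet ρ ((1 + κ) * Real.exp s)) : ℝ) ≤ #(bohrSet ρ (Real.exp s)) :=
      Nat.cast_le.2 (card_le_card (mono ρ (mul_le_of_le_one_left (Real.exp_pos s).le (by linarith))))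
    rw [abs_of_nonpos (sub_nonpos.2 hmono), abs_of_neg hκ0, neg_sub]
    exact sub_le_mul_of_log_sub_le (hpos _ (Real.exp_pos s)) (hpos _ (by positivity))
      (hinc.trans (mul_le_mul_of_nonneg_left huκ hK)) |>.trans_eq (by ring)

variable [NormedSpace ℝ A] [FiniteDimensional ℝ A]

theorem card_le_of_separated {r : ℝ} (hr : 0 < r) {T : Finset G} (hT : T ⊆ bohrSet ρ (2 * r))
    (hsep : (T : Set G).Pairwise fun g k => r < ‖(ρ g : A) - ρ k‖) :
    #T ≤ 5 ^ Module.finrank ℝ A := by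
  classical
  set v : G → A := fun g => r⁻¹ • ((ρ g : A) - 1)
  have hv : ∀ g k, ‖v g - v k‖ = r⁻¹ * ‖(ρ g : A) - ρ k‖ := fun g k => by
    rw [← smul_sub, sub_sub_sub_cancel_right, norm_smul, Real.norm_of_nonneg (by positivity)]
  have hinj : Set.InjOn v T := fun g hg k hk hgk => by
    by_contra hne
    have h0 := hv g k
    rw [hgk, sub_self, norm_zero] at h0
    exact (mul_pos (inv_pos.2 hr) (hr.trans (hsep hg hk hne))).ne h0
  rw [← card_image_of_injOn hinj]
  refine Besicovitch.card_le_of_separated _ (fun c hc => ?_) (fun c hc c' hc' hcc' => ?_)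
  · obtain ⟨g, hg, rfl⟩ := mem_image.1 hc
    rw [norm_smul, Real.norm_of_nonneg (by positivity), inv_mul_le_iff₀ hr]
    exact ((mem_iff ρ).1 (hT hg)).trans_eq (mul_comm 2 r)
  · obtain ⟨g, hg, rfl⟩ := mem_image.1 hc
    obtain ⟨k, hk, rfl⟩ := mem_image.1 hc'
    rw [hv, le_inv_mul_iff₀ hr, mul_one]
    exact (hsep hg hk (ne_of_apply_ne v hcc')).le

variable [CStarRing A]

theorem card_two_mul_le {r : ℝ} (hr : 0 < r) :
    #(bohrSet ρ (2 * r)) ≤ 5 ^ Module.finrank ℝ A * #(bohrSet ρ r) := by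
  classical
  obtain ⟨T, hT, hsep, hcov⟩ := (bohrSet ρ (2 * r)).exists_subset_pairwise_forall_exists_not
    (R := fun g k => r < ‖(ρ g : A) - ρ k‖) (fun g k h => by rwa [norm_sub_rev])
    (fun g => by simp [hr.le])
  calc #(bohrSet ρ (2 * r)) ≤ #(T * bohrSet ρ r) := card_le_card fun g hg => by
        obtain ⟨t, ht, hgt⟩ := hcov g hg
        rw [← mul_inv_cancel_left t g]
        refine Finset.mul_mem_mul ht ((mem_iff ρ).2 ?_)
        have hnorm := Unitary.norm_mul_sub_mul (ρ t⁻¹) (ρ g) (ρ t)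
        rw [← MulMemClass.coe_mul, ← MulMemClass.coe_mul, ← map_mul, ← map_mul, inv_mul_cancel,
          map_one, OneMemClass.coe_one] at hnorm
        exact hnorm.trans_le (not_lt.1 hgt)
    _ ≤ #T * #(bohrSet ρ r) := card_mul_le
    _ ≤ 5 ^ Module.finrank ℝ A * #(bohrSet ρ r) :=
        Nat.mul_le_mul_right _ (card_le_of_separated ρ hr hT hsep)

theorem logCardExp_add_log_two_sub_le (s : ℝ) :
    logCardExp ρ (s + Real.log 2) - logCardExp ρ s ≤ Module.finrank ℝ A * Real.log 5 := by
  have hdouble := card_two_mul_le ρ (Real.exp_pos s)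
  rw [logCardExp_apply, logCardExp_apply, Real.exp_add, Real.exp_log two_pos, mul_comm,
    sub_le_iff_le_add, ← Real.log_pow,
    ← Real.log_mul (by positivity) (cast_card_pos ρ (Real.exp_pos s).le).ne']
  exact Real.log_le_log (cast_card_pos ρ (by positivity)) (by exact_mod_cast hdouble)

theorem exists_regular {δ D : ℝ}
    (hδ : 0 < δ) (hD : 1 ≤ D) (hA : (Module.finrank ℝ A : ℝ) ≤ 2 * D) :
    ∃ δ₁, δ ≤ δ₁ ∧ δ₁ ≤ 2 * δ ∧ ∀ κ : ℝ, |κ| ≤ 1 / (100 * D) →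
      |(#(bohrSet ρ ((1 + κ) * δ₁)) : ℝ) - #(bohrSet ρ δ₁)| ≤
        100 * D * |κ| * #(bohrSet ρ δ₁) := by
  set ε := 1 / (100 * D)
  have hDε : D * ε = 1 / 100 := by simp only [ε]; field_simp
  have hε0 : 0 < ε := by positivity
  have hlog2 := Real.log_two_gt_d9
  have hlog5 : Real.log 5 < 3 * Real.log 2 := by
    have hlog8 : Real.log 8 = 3 * Real.log 2 := by
      rw [show (8 : ℝ) = 2 ^ 3 by norm_num, Real.log_pow, Nat.cast_ofNat]
    exact hlog8 ▸ Real.log_lt_log (by norm_num) (by norm_num)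
  -- the doubling bound `2 D log 5 < 6 D log 2` is less than a quarter of `50 D (log 2 - 4 ε)`
  have hdouble : logCardExp ρ (Real.log δ + Real.log 2) - logCardExp ρ (Real.log δ) ≤
      2 * D * Real.log 5 :=
    (logCardExp_add_log_two_sub_le ρ _).trans
      (mul_le_mul_of_nonneg_right hA (Real.log_nonneg (by norm_num)))
  obtain ⟨s, ⟨has, hsb⟩, hs⟩ := (logCardExp ρ).exists_forall_increment_le
    (a := Real.log δ + 2 * ε) (b := Real.log δ + Real.log 2 - 2 * ε) (u₀ := 2 * ε)
    (K := 50 * D)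
    (by nlinarith) (by positivity) (by
      rw [sub_add_cancel, add_sub_cancel_right]
      nlinarith)
  refine ⟨Real.exp s, ?_, ?_, fun κ hκ => ?_⟩
  · rw [← Real.exp_log hδ]
    exact Real.exp_le_exp.2 (by linarith)
  · rw [← Real.exp_log hδ, ← Real.exp_log two_pos, ← Real.exp_add, add_comm]
    exact Real.exp_le_exp.2 (by linarith)
  · refine (abs_card_sub_le_of_increment_le ρ (by positivity) (by nlinarith) (by nlinarith) hs
      hκ).trans_eq (by ring)

end bohrSet

end BohrSets

theorem finrank_real_continuousLinearMap_euclideanSpace (d : ℕ) :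
    Module.finrank ℝ (EuclideanSpace ℂ (Fin d) →L[ℂ] EuclideanSpace ℂ (Fin d)) = 2 * d ^ 2 := by
  rw [finrank_real_of_complex, ← LinearMap.toContinuousLinearMap.finrank_eq,
    Module.finrank_linearMap, finrank_euclideanSpace_fin]
  ring

theorem stmt18_general {G : Type*} [Group G] [Fintype G] (d : ℕ)
    (ρ : G →* unitary (EuclideanSpace ℂ (Fin d) →L[ℂ] EuclideanSpace ℂ (Fin d)))
    (δ : ℝ) (hδ : 0 < δ) :
    ∃ δ₁ : ℝ, δ ≤ δ₁ ∧ δ₁ ≤ 2 * δ ∧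
      ∀ κ : ℝ, |κ| ≤ 1 / (100 * (d : ℝ) ^ 2) →
        |(Nat.card {g : G //
            ‖(ρ g : EuclideanSpace ℂ (Fin d) →L[ℂ] EuclideanSpace ℂ (Fin d)) - 1‖ ≤
              (1 + κ) * δ₁} : ℝ) -
          (Nat.card {g : G //
            ‖(ρ g : EuclideanSpace ℂ (Fin d) →L[ℂ] EuclideanSpace ℂ (Fin d)) - 1‖ ≤ δ₁} : ℝ)| ≤
        100 * (d : ℝ) ^ 2 * |κ| *
          (Nat.card {g : G //
            ‖(ρ g : EuclideanSpace ℂ (Fin d) →L[ℂ] EuclideanSpace ℂ (Fin d)) - 1‖ ≤ δ₁} : ℝ) := by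
  rcases Nat.eq_zero_or_pos d with rfl | hd
  · refine ⟨δ, le_rfl, by linarith, fun κ hκ => ?_⟩
    obtain rfl : κ = 0 := abs_nonpos_iff.1 (by simpa using hκ)
    simp
  · obtain ⟨δ₁, hδ₁, hδ₁', hreg⟩ := bohrSet.exists_regular ρ hδ
      (one_le_pow₀ (Nat.one_le_cast.2 hd)) (by
        rw [finrank_real_continuousLinearMap_euclideanSpace]; push_cast; rfl)
    refine ⟨δ₁, hδ₁, hδ₁', fun κ hκ => ?_⟩
    simpa only [← bohrSet.card_eq] using hreg κ hκ

/-- for any `δ ∈ (0,1/2]` and any unitary representation `ρ` of a finite group,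
there is `δ₁ ∈ [δ,2δ]` such that the Bohr set `Bohr(ρ,δ₁) = {g : ‖ρ(g) − I‖_op ≤ δ₁}` is
regular: `| |Bohr(ρ,(1+κ)δ₁)| − |Bohr(ρ,δ₁)| | ≤ 100 d_ρ² |κ| · |Bohr(ρ,δ₁)|` whenever
`|κ| ≤ 1/(100 d_ρ²)`. -/
theorem stmt18 {G : Type*} [Group G] [Fintype G] (d : ℕ)
    (ρ : G →* unitary (EuclideanSpace ℂ (Fin d) →L[ℂ] EuclideanSpace ℂ (Fin d)))
    (δ : ℝ) (hδ : 0 < δ) (hδ2 : δ ≤ 1 / 2) :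
    ∃ δ₁ : ℝ, δ ≤ δ₁ ∧ δ₁ ≤ 2 * δ ∧
      ∀ κ : ℝ, |κ| ≤ 1 / (100 * (d : ℝ) ^ 2) →
        |(Nat.card {g : G //
            ‖(ρ g : EuclideanSpace ℂ (Fin d) →L[ℂ] EuclideanSpace ℂ (Fin d)) - 1‖ ≤
              (1 + κ) * δ₁} : ℝ) -
          (Nat.card {g : G //
            ‖(ρ g : EuclideanSpace ℂ (Fin d) →L[ℂ] EuclideanSpace ℂ (Fin d)) - 1‖ ≤ δ₁} : ℝ)| ≤
        100 * (d : ℝ) ^ 2 * |κ| *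
          (Nat.card {g : G //
            ‖(ρ g : EuclideanSpace ℂ (Fin d) →L[ℂ] EuclideanSpace ℂ (Fin d)) - 1‖ ≤ δ₁} : ℝ) :=
  stmt18_general d ρ δ hδ
end
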